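/- Let n ≥ 3 and let Ω ⊊ M be a domain in a compact Riemannian manifold (M,g) without boundary. Suppose u and v are positive smooth solutions of Δ_g w − (n-2)/(4(n-1)) S_g w = (n(n-2)/4) w^((n+2)/(n-2)) in Ω with w → +∞ at ∂Ω, and suppose u ≤ v in Ω with (v/u − 1) → 0 at ∂Ω. Then u = v in Ω. -/

import Mathlib

open Real Filter

/-- The Laplace–Beltrami operator of a Riemannian metric `gm` (given in coordinates as a
matrix field) acting on a function `u`:
`Δ_g u = (det g)^{-1/2} ∂_i ( (det g)^{1/2} g^{ij} ∂_j u )`. -/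
noncomputable def lapMetric {n : ℕ} (gm : EuclideanSpace ℝ (Fin n) → Matrix (Fin n) (Fin n) ℝ)
    (u : EuclideanSpace ℝ (Fin n) → ℝ) (x : EuclideanSpace ℝ (Fin n)) : ℝ :=
  (Real.sqrt (gm x).det)⁻¹ *
    ∑ i, fderiv ℝ
      (fun y => Real.sqrt (gm y).det *
        ∑ j, (gm y)⁻¹ i j * fderiv ℝ u y (EuclideanSpace.single j 1))
      x (EuclideanSpace.single i 1)

section YamabeAux

lemma clm_eucl_apply {n : ℕ} (L : EuclideanSpace ℝ (Fin n) →L[ℝ] ℝ) (ξ : EuclideanSpace ℝ (Fin n)) :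
    L ξ = ∑ j, ξ j * L (EuclideanSpace.single j 1) := by
  have hξ : ξ = ∑ j, ξ j • EuclideanSpace.single j 1 := by
    have := (EuclideanSpace.basisFun (Fin n) ℝ).sum_repr ξ
    simp only [EuclideanSpace.basisFun_repr, EuclideanSpace.basisFun_apply] at this
    exact this.symm
  conv_lhs => rw [hξ]
  simp [smul_eq_mul]

lemma posdef_of_quad {n : ℕ} {A : Matrix (Fin n) (Fin n) ℝ} (hs : A.IsSymm)
    (hp : ∀ ξ : EuclideanSpace ℝ (Fin n), ξ ≠ 0 → 0 < ∑ i, ∑ j, A i j * ξ i * ξ j) :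
    A.PosDef := by
  refine Matrix.PosDef.of_dotProduct_mulVec_pos ?_ ?_
  · rw [Matrix.IsHermitian]
    ext i j
    simp [Matrix.conjTranspose_apply, hs.apply]
  · intro x hx
    have h0 : (WithLp.toLp 2 x : EuclideanSpace ℝ (Fin n)) ≠ 0 := by simpa using hx
    have := hp _ h0
    simp only [dotProduct, Matrix.mulVec, star_trivial]
    calc (0:ℝ) < ∑ i, ∑ j, A i j * x i * x j := this
      _ = ∑ i, x i * ∑ j, A i j * x j := by
          refine Finset.sum_congr rfl fun i _ => ?_
          rw [Finset.mul_sum]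
          exact Finset.sum_congr rfl fun j _ => by ring

open scoped MatrixOrder

lemma trace_quad_nonpos {n : ℕ} {A H : Matrix (Fin n) (Fin n) ℝ}
    (hA : A.PosSemidef)
    (hH : ∀ ξ : Fin n → ℝ, ∑ i, ∑ j, ξ i * ξ j * H i j ≤ 0) :
    ∑ i, ∑ j, A i j * H i j ≤ 0 := by
  set S := CFC.sqrt A with hS
  have hSmul : S * S = A := CFC.sqrt_mul_sqrt_self A hA.nonneg
  have hsymm : ∀ i j, S i j = S j i := fun i j => by
    have := (Matrix.nonneg_iff_posSemidef.mp (CFC.sqrt_nonneg A)).1.apply j i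
    simpa using this
  have expand : ∀ i j, A i j = ∑ k, S i k * S j k := by
    intro i j
    rw [← hSmul, Matrix.mul_apply]
    exact Finset.sum_congr rfl fun k _ => by rw [hsymm j k]
  calc ∑ i, ∑ j, A i j * H i j
      = ∑ i, ∑ j, ∑ k, S i k * S j k * H i j := by
        refine Finset.sum_congr rfl fun i _ => Finset.sum_congr rfl fun j _ => ?_
        rw [expand, Finset.sum_mul]
    _ = ∑ i, ∑ k, ∑ j, S i k * S j k * H i j :=
        Finset.sum_congr rfl fun i _ => Finset.sum_comm
    _ = ∑ k, ∑ i, ∑ j, S i k * S j k * H i j := Finset.sum_comm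
    _ ≤ 0 := Finset.sum_nonpos fun k _ => hH (fun l => S l k)

lemma second_deriv_test {φ φ' : ℝ → ℝ} {c : ℝ}
    (hmax : IsLocalMax φ 0)
    (hd : ∀ᶠ t in nhds (0:ℝ), HasDerivAt φ (φ' t) t)
    (hd2 : HasDerivAt φ' c 0) : c ≤ 0 := by
  by_contra hc
  push_neg at hc
  have h0 : φ' 0 = 0 := by
    have h1 := hmax.deriv_eq_zero
    rwa [hd.self_of_nhds.deriv] at h1
  have hs : Tendsto (slope φ' 0) (nhdsWithin 0 {(0:ℝ)}ᶜ) (nhds c) :=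
    hasDerivAt_iff_tendsto_slope.1 hd2
  have hposslope : ∀ᶠ t in nhdsWithin 0 {(0:ℝ)}ᶜ, 0 < slope φ' 0 t :=
    hs.eventually (eventually_gt_nhds hc)
  rw [eventually_nhdsWithin_iff] at hposslope
  have hall : ∀ᶠ t in nhds (0:ℝ),
      HasDerivAt φ (φ' t) t ∧ φ t ≤ φ 0 ∧ (t ∈ ({(0:ℝ)}ᶜ : Set ℝ) → 0 < slope φ' 0 t) :=
    hd.and (hmax.and hposslope)
  rcases Metric.eventually_nhds_iff.1 hall with ⟨δ, hδ, hball⟩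
  have hmem : ∀ t : ℝ, |t| < δ →
      HasDerivAt φ (φ' t) t ∧ φ t ≤ φ 0 ∧ (t ≠ 0 → 0 < slope φ' 0 t) := by
    intro t ht
    have := hball (by simpa [Real.dist_eq] using ht)
    exact ⟨this.1, this.2.1, fun h => this.2.2 h⟩
  have hmono : StrictMonoOn φ (Set.Icc 0 (δ/2)) := by
    apply strictMonoOn_of_deriv_pos (convex_Icc _ _)
    · intro t ht
      have habs : |t| < δ := by
        rw [abs_lt]; constructor <;> nlinarith [ht.1, ht.2]
      exact (hmem t habs).1.continuousAt.continuousWithinAt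
    · intro t ht
      rw [interior_Icc] at ht
      have habs : |t| < δ := by
        rw [abs_lt]; constructor <;> nlinarith [ht.1, ht.2]
      rcases hmem t habs with ⟨hdt, _, hst⟩
      rw [hdt.deriv]
      have hslope := hst (ne_of_gt ht.1)
      have : slope φ' 0 t = φ' t / t := by
        simp [slope, h0, div_eq_inv_mul]
      rw [this] at hslope
      have hp := mul_pos hslope ht.1
      rwa [div_mul_cancel₀ _ (ne_of_gt ht.1)] at hp
  have hlt : φ 0 < φ (δ/2) :=
    hmono (by constructor <;> nlinarith) (by constructor <;> nlinarith) (by nlinarith)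
  have hle : φ (δ/2) ≤ φ 0 := (hmem (δ/2) (by rw [abs_lt]; constructor <;> nlinarith)).2.1
  linarith

variable {V : Type*} [NormedAddCommGroup V] [NormedSpace ℝ V]

lemma contDiff_matrix_det {m : ℕ} {N : WithTop ℕ∞} {M : V → Matrix (Fin m) (Fin m) ℝ}
    (h : ∀ i j, ContDiff ℝ N fun y => M y i j) : ContDiff ℝ N fun y => (M y).det := by
  have : (fun y => (M y).det)
      = fun y => ∑ σ : Equiv.Perm (Fin m), ((Equiv.Perm.sign σ : ℤ) : ℝ) * ∏ i, M y (σ i) i := by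
    funext y; rw [Matrix.det_apply']
  rw [this]
  exact ContDiff.sum fun σ _ => contDiff_const.mul (contDiff_prod fun i _ => h _ _)

lemma contDiff_matrix_inv {m : ℕ} {N : WithTop ℕ∞} {M : V → Matrix (Fin m) (Fin m) ℝ}
    (h : ∀ i j, ContDiff ℝ N fun y => M y i j) (hdet : ∀ y, (M y).det ≠ 0) (i j : Fin m) :
    ContDiff ℝ N fun y => (M y)⁻¹ i j := by
  have heq : (fun y => (M y)⁻¹ i j)
      = fun y => ((M y).det)⁻¹ * ((M y).updateRow j (Pi.single i 1)).det := by
    funext y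
    rw [Matrix.inv_def, Ring.inverse_eq_inv']
    simp [Matrix.adjugate_apply]
  rw [heq]
  refine ContDiff.mul ((contDiff_matrix_det h).inv hdet) (contDiff_matrix_det ?_)
  intro a b
  by_cases hab : a = j
  · subst hab
    simpa [Matrix.updateRow_apply] using contDiff_const
  · simpa [Matrix.updateRow_apply, hab] using h a b

end YamabeAux

section YamabeAux2

lemma lapMetric_localMax_nonpos {n : ℕ}
    (gm : EuclideanSpace ℝ (Fin n) → Matrix (Fin n) (Fin n) ℝ)
    (hgmsmooth : ∀ i j, ContDiff ℝ (⊤ : ℕ∞) fun x => gm x i j)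
    (hgmsymm : ∀ x, (gm x).IsSymm)
    (hgmpos : ∀ x, ∀ ξ : EuclideanSpace ℝ (Fin n), ξ ≠ 0 → 0 < ∑ i, ∑ j, gm x i j * ξ i * ξ j)
    {s : Set (EuclideanSpace ℝ (Fin n))} (hs : IsOpen s)
    {h : EuclideanSpace ℝ (Fin n) → ℝ} (hC : ContDiffOn ℝ (⊤ : ℕ∞) h s)
    {x0 : EuclideanSpace ℝ (Fin n)} (hx0 : x0 ∈ s) (hmax : IsLocalMax h x0) :
    lapMetric gm h x0 ≤ 0 := by
  classical
  have hpdf : ∀ x, (gm x).PosDef := fun x => posdef_of_quad (hgmsymm x) (hgmpos x)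
  have hdetpos : ∀ x, 0 < (gm x).det := fun x => (hpdf x).det_pos
  have hdet1 : ContDiff ℝ 1 fun y => (gm y).det :=
    contDiff_matrix_det fun i j => (hgmsmooth i j).of_le (by simp)
  have hsqd : ∀ x : EuclideanSpace ℝ (Fin n),
      DifferentiableAt ℝ (fun y => Real.sqrt (gm y).det) x := fun x =>
    (hdet1.contDiffAt.sqrt (ne_of_gt (hdetpos x))).differentiableAt one_ne_zero
  have hinvd : ∀ (i j) (x : EuclideanSpace ℝ (Fin n)),
      DifferentiableAt ℝ (fun y => (gm y)⁻¹ i j) x := fun i j x =>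
    ((contDiff_matrix_inv (fun i j => (hgmsmooth i j).of_le le_rfl)
      (fun y => ne_of_gt (hdetpos y)) i j).differentiable (by simp : ((⊤ : ℕ∞) : WithTop ℕ∞) ≠ 0)) x
  have hdh : ContDiffOn ℝ 1 (fderiv ℝ h) s := hC.fderiv_of_isOpen hs (WithTop.coe_le_coe.mpr le_top)
  have hdiffd : DifferentiableAt ℝ (fderiv ℝ h) x0 :=
    ((hdh.differentiableOn one_ne_zero) x0 hx0).differentiableAt (hs.mem_nhds hx0)
  have hdj : ∀ j : Fin n,
      DifferentiableAt ℝ (fun y => fderiv ℝ h y (EuclideanSpace.single j 1)) x0 :=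
    fun j => hdiffd.clm_apply (differentiableAt_const _)
  have hcrit : fderiv ℝ h x0 = 0 := hmax.fderiv_eq_zero
  have hdj0 : ∀ j : Fin n, fderiv ℝ h x0 (EuclideanSpace.single j 1) = 0 := by
    intro j; rw [hcrit]; rfl
  set H : Fin n → Fin n → ℝ := fun i j =>
    fderiv ℝ (fun y => fderiv ℝ h y (EuclideanSpace.single j 1)) x0 (EuclideanSpace.single i 1)
    with hHdef
  have hsqne : Real.sqrt (gm x0).det ≠ 0 :=
    ne_of_gt (Real.sqrt_pos.mpr (hdetpos x0))
  -- Step 1: evaluate the Laplacian at the critical point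
  have hFi : ∀ i : Fin n,
      fderiv ℝ (fun y => Real.sqrt (gm y).det *
          ∑ j, (gm y)⁻¹ i j * fderiv ℝ h y (EuclideanSpace.single j 1)) x0
        (EuclideanSpace.single i 1)
      = Real.sqrt (gm x0).det * ∑ j, (gm x0)⁻¹ i j * H i j := by
    intro i
    have hbdiff : DifferentiableAt ℝ
        (fun y => ∑ j, (gm y)⁻¹ i j * fderiv ℝ h y (EuclideanSpace.single j 1)) x0 :=
      DifferentiableAt.fun_sum fun j _ => (hinvd i j x0).mul (hdj j)
    have hb0 : (∑ j, (gm x0)⁻¹ i j * fderiv ℝ h x0 (EuclideanSpace.single j 1)) = 0 := by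
      simp [hdj0]
    rw [fderiv_fun_mul (hsqd x0) hbdiff, hb0, zero_smul, add_zero,
      fderiv_fun_sum (fun j _ => (hinvd i j x0).fun_mul (hdj j))]
    simp only [ContinuousLinearMap.smul_apply, ContinuousLinearMap.sum_apply, smul_eq_mul]
    congr 1
    refine Finset.sum_congr rfl fun j _ => ?_
    rw [fderiv_fun_mul (hinvd i j x0) (hdj j), hdj0 j, zero_smul, add_zero]
    simp only [ContinuousLinearMap.add_apply, ContinuousLinearMap.smul_apply, smul_eq_mul]
    rfl
  have step1 : lapMetric gm h x0 = ∑ i, ∑ j, (gm x0)⁻¹ i j * H i j := by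
    unfold lapMetric
    rw [Finset.sum_congr rfl fun i _ => hFi i, ← Finset.mul_sum,
      inv_mul_cancel_left₀ hsqne]
  -- Step 2: the Hessian-like matrix has nonpositive quadratic form
  have step2 : ∀ ξ : Fin n → ℝ, ∑ i, ∑ j, ξ i * ξ j * H i j ≤ 0 := by
    intro ξ
    set ξ' : EuclideanSpace ℝ (Fin n) := WithLp.toLp 2 ξ with hξ'
    set γ : ℝ → EuclideanSpace ℝ (Fin n) := fun t => x0 + t • ξ' with hγdef
    have hγ0 : γ 0 = x0 := by simp [hγdef]
    have hγcont : Continuous γ := by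
      apply continuous_const.add (continuous_id.smul continuous_const)
    have hcont : Tendsto γ (nhds 0) (nhds x0) := by
      simpa [hγ0] using hγcont.tendsto 0
    have hγd : ∀ t : ℝ, HasDerivAt γ ξ' t := by
      intro t
      have := ((hasDerivAt_id t).smul_const ξ').const_add x0
      simpa [hγdef] using this
    have hmemev : ∀ᶠ t in nhds (0:ℝ), γ t ∈ s := hcont.eventually (hs.eventually_mem hx0)
    have hmaxφ : IsLocalMax (fun t => h (γ t)) 0 := by
      have := hcont.eventually hmax
      refine this.mono fun t ht => ?_
      simpa [hγ0] using ht
    have hdφ : ∀ᶠ t in nhds (0:ℝ),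
        HasDerivAt (fun t => h (γ t)) (fderiv ℝ h (γ t) ξ') t := by
      refine hmemev.mono fun t ht => ?_
      have hdiff : DifferentiableAt ℝ h (γ t) :=
        ((hC.differentiableOn (by simp)) (γ t) ht).differentiableAt (hs.mem_nhds ht)
      exact hdiff.hasFDerivAt.comp_hasDerivAt t (hγd t)
    have hψd : DifferentiableAt ℝ (fun y => fderiv ℝ h y ξ') x0 :=
      hdiffd.clm_apply (differentiableAt_const _)
    have hd2 : HasDerivAt (fun t => fderiv ℝ h (γ t) ξ')
        (fderiv ℝ (fun y => fderiv ℝ h y ξ') x0 ξ') 0 := by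
      have h1 : HasFDerivAt (fun y => fderiv ℝ h y ξ')
          (fderiv ℝ (fun y => fderiv ℝ h y ξ') x0) (γ 0) := by
        rw [hγ0]; exact hψd.hasFDerivAt
      exact h1.comp_hasDerivAt 0 (hγd 0)
    have hkey : fderiv ℝ (fun y => fderiv ℝ h y ξ') x0 ξ' ≤ 0 :=
      second_deriv_test hmaxφ hdφ hd2
    have hψeq : (fun y => fderiv ℝ h y ξ')
        = fun y => ∑ j, ξ j * fderiv ℝ h y (EuclideanSpace.single j 1) := by
      funext y; exact clm_eucl_apply (fderiv ℝ h y) ξ'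
    have hval : fderiv ℝ (fun y => fderiv ℝ h y ξ') x0 ξ' = ∑ j, ξ j * ∑ i, ξ i * H i j := by
      rw [hψeq, fderiv_fun_sum (fun j _ => (hdj j).const_mul (ξ j))]
      simp only [ContinuousLinearMap.sum_apply]
      refine Finset.sum_congr rfl fun j _ => ?_
      rw [fderiv_const_mul (hdj j) (ξ j)]
      simp only [ContinuousLinearMap.smul_apply, smul_eq_mul]
      congr 1
      exact clm_eucl_apply (fderiv ℝ (fun y => fderiv ℝ h y (EuclideanSpace.single j 1)) x0) ξ'
    calc ∑ i, ∑ j, ξ i * ξ j * H i j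
        = ∑ j, ξ j * ∑ i, ξ i * H i j := by
          rw [Finset.sum_comm]
          refine Finset.sum_congr rfl fun j _ => ?_
          rw [Finset.mul_sum]
          exact Finset.sum_congr rfl fun i _ => by ring
      _ ≤ 0 := hval ▸ hkey
  rw [step1]
  exact trace_quad_nonpos (hpdf x0).inv.posSemidef step2

lemma lapMetric_sub_const_mul {n : ℕ}
    (gm : EuclideanSpace ℝ (Fin n) → Matrix (Fin n) (Fin n) ℝ)
    (hgmsmooth : ∀ i j, ContDiff ℝ (⊤ : ℕ∞) fun x => gm x i j)
    (hgmsymm : ∀ x, (gm x).IsSymm)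
    (hgmpos : ∀ x, ∀ ξ : EuclideanSpace ℝ (Fin n), ξ ≠ 0 → 0 < ∑ i, ∑ j, gm x i j * ξ i * ξ j)
    {s : Set (EuclideanSpace ℝ (Fin n))} (hs : IsOpen s)
    {u v : EuclideanSpace ℝ (Fin n) → ℝ}
    (huC : ContDiffOn ℝ (⊤ : ℕ∞) u s) (hvC : ContDiffOn ℝ (⊤ : ℕ∞) v s)
    (t : ℝ) {x : EuclideanSpace ℝ (Fin n)} (hx : x ∈ s) :
    lapMetric gm (fun y => v y - t * u y) x = lapMetric gm v x - t * lapMetric gm u x := by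
  classical
  have hpdf : ∀ z, (gm z).PosDef := fun z => posdef_of_quad (hgmsymm z) (hgmpos z)
  have hdetpos : ∀ z, 0 < (gm z).det := fun z => (hpdf z).det_pos
  have hdet1 : ContDiff ℝ 1 fun y => (gm y).det :=
    contDiff_matrix_det fun i j => (hgmsmooth i j).of_le (by simp)
  have hsqd : ∀ z : EuclideanSpace ℝ (Fin n),
      DifferentiableAt ℝ (fun y => Real.sqrt (gm y).det) z := fun z =>
    (hdet1.contDiffAt.sqrt (ne_of_gt (hdetpos z))).differentiableAt one_ne_zero
  have hinvd : ∀ (i j) (z : EuclideanSpace ℝ (Fin n)),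
      DifferentiableAt ℝ (fun y => (gm y)⁻¹ i j) z := fun i j z =>
    ((contDiff_matrix_inv (fun i j => (hgmsmooth i j).of_le le_rfl)
      (fun y => ne_of_gt (hdetpos y)) i j).differentiable (by simp : ((⊤ : ℕ∞) : WithTop ℕ∞) ≠ 0)) z
  have hud : ∀ y ∈ s, DifferentiableAt ℝ u y := fun y hy =>
    ((huC.differentiableOn (by simp)) y hy).differentiableAt (hs.mem_nhds hy)
  have hvd : ∀ y ∈ s, DifferentiableAt ℝ v y := fun y hy =>
    ((hvC.differentiableOn (by simp)) y hy).differentiableAt (hs.mem_nhds hy)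
  have hduC : ContDiffOn ℝ 1 (fderiv ℝ u) s := huC.fderiv_of_isOpen hs (WithTop.coe_le_coe.mpr le_top)
  have hdvC : ContDiffOn ℝ 1 (fderiv ℝ v) s := hvC.fderiv_of_isOpen hs (WithTop.coe_le_coe.mpr le_top)
  have hdju : ∀ j : Fin n,
      DifferentiableAt ℝ (fun y => fderiv ℝ u y (EuclideanSpace.single j 1)) x :=
    fun j => (((hduC.differentiableOn one_ne_zero) x hx).differentiableAt
      (hs.mem_nhds hx)).clm_apply (differentiableAt_const _)
  have hdjv : ∀ j : Fin n,
      DifferentiableAt ℝ (fun y => fderiv ℝ v y (EuclideanSpace.single j 1)) x :=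
    fun j => (((hdvC.differentiableOn one_ne_zero) x hx).differentiableAt
      (hs.mem_nhds hx)).clm_apply (differentiableAt_const _)
  -- the inner functions
  set Fu : Fin n → EuclideanSpace ℝ (Fin n) → ℝ := fun i y => Real.sqrt (gm y).det *
    ∑ j, (gm y)⁻¹ i j * fderiv ℝ u y (EuclideanSpace.single j 1) with hFu
  set Fv : Fin n → EuclideanSpace ℝ (Fin n) → ℝ := fun i y => Real.sqrt (gm y).det *
    ∑ j, (gm y)⁻¹ i j * fderiv ℝ v y (EuclideanSpace.single j 1) with hFv
  have hFud : ∀ i, DifferentiableAt ℝ (Fu i) x := fun i =>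
    (hsqd x).mul (DifferentiableAt.fun_sum fun j _ => (hinvd i j x).mul (hdju j))
  have hFvd : ∀ i, DifferentiableAt ℝ (Fv i) x := fun i =>
    (hsqd x).mul (DifferentiableAt.fun_sum fun j _ => (hinvd i j x).mul (hdjv j))
  -- pointwise identity of inner functions on s
  have hinner : ∀ i : Fin n, ∀ y ∈ s,
      Real.sqrt (gm y).det *
        ∑ j, (gm y)⁻¹ i j * fderiv ℝ (fun y => v y - t * u y) y (EuclideanSpace.single j 1)
      = Fv i y - t * Fu i y := by
    intro i y hy
    have hder : fderiv ℝ (fun y => v y - t * u y) y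
        = fderiv ℝ v y - t • fderiv ℝ u y := by
      rw [fderiv_fun_sub (hvd y hy) ((hud y hy).const_mul t), fderiv_const_mul (hud y hy)]
    rw [hder]
    simp only [ContinuousLinearMap.sub_apply, ContinuousLinearMap.smul_apply, smul_eq_mul,
      hFu, hFv]
    have hterm : ∀ j : Fin n, (gm y)⁻¹ i j * (fderiv ℝ v y (EuclideanSpace.single j 1)
        - t * fderiv ℝ u y (EuclideanSpace.single j 1))
        = (gm y)⁻¹ i j * fderiv ℝ v y (EuclideanSpace.single j 1)
          - t * ((gm y)⁻¹ i j * fderiv ℝ u y (EuclideanSpace.single j 1)) := fun j => by ring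
    rw [Finset.sum_congr rfl fun j _ => hterm j, Finset.sum_sub_distrib, ← Finset.mul_sum]
    ring
  -- fderiv of inner functions
  have hfd : ∀ i : Fin n,
      fderiv ℝ (fun y => Real.sqrt (gm y).det *
        ∑ j, (gm y)⁻¹ i j * fderiv ℝ (fun y => v y - t * u y) y (EuclideanSpace.single j 1)) x
      = fderiv ℝ (Fv i) x - t • fderiv ℝ (Fu i) x := by
    intro i
    have hev : (fun y => Real.sqrt (gm y).det *
        ∑ j, (gm y)⁻¹ i j * fderiv ℝ (fun y => v y - t * u y) y (EuclideanSpace.single j 1))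
        =ᶠ[nhds x] fun y => Fv i y - t * Fu i y := by
      filter_upwards [hs.eventually_mem hx] with y hy
      exact hinner i y hy
    rw [hev.fderiv_eq, fderiv_fun_sub (hFvd i) ((hFud i).const_mul t),
      fderiv_const_mul (hFud i)]
  -- combine
  unfold lapMetric
  rw [Finset.sum_congr rfl fun i _ => congrArg (fun L => L (EuclideanSpace.single i 1)) (hfd i)]
  simp only [ContinuousLinearMap.sub_apply, ContinuousLinearMap.smul_apply, smul_eq_mul]
  rw [Finset.sum_sub_distrib, mul_sub, ← Finset.mul_sum, mul_left_comm]


end YamabeAux2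

/-- uniqueness for the singular Yamabe problem, stated in a coordinate chart
for a Riemannian metric `gm` with scalar curvature `Sg`: if `u ≤ v` are two positive smooth
solutions of `Δ_g w − ((n-2)/(4(n-1))) S_g w = (n(n-2)/4) w^((n+2)/(n-2))` in `Ω`, both
blowing up at `∂Ω`, and `v/u − 1 → 0` at `∂Ω`, then `u = v` in `Ω`. -/
theorem uniqueness_singular_yamabe (n : ℕ) (hn : 3 ≤ n)
    (Ω : Set (EuclideanSpace ℝ (Fin n))) (hΩopen : IsOpen Ω)
    (hΩbdd : Bornology.IsBounded Ω) (hΩne : Ω.Nonempty)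
    (gm : EuclideanSpace ℝ (Fin n) → Matrix (Fin n) (Fin n) ℝ)
    (hgmsmooth : ∀ i j, ContDiff ℝ (⊤ : ℕ∞) fun x => gm x i j)
    (hgmsymm : ∀ x, (gm x).IsSymm)
    (hgmpos : ∀ x, ∀ ξ : EuclideanSpace ℝ (Fin n), ξ ≠ 0 → 0 < ∑ i, ∑ j, gm x i j * ξ i * ξ j)
    (Sg : EuclideanSpace ℝ (Fin n) → ℝ) (hSg : Continuous Sg)
    (u v : EuclideanSpace ℝ (Fin n) → ℝ)
    (huC : ContDiffOn ℝ (⊤ : ℕ∞) u Ω) (hvC : ContDiffOn ℝ (⊤ : ℕ∞) v Ω)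
    (hupos : ∀ x ∈ Ω, 0 < u x) (hvpos : ∀ x ∈ Ω, 0 < v x)
    (hueq : ∀ x ∈ Ω, lapMetric gm u x - ((n : ℝ) - 2) / (4 * ((n : ℝ) - 1)) * Sg x * u x =
      (n * (n - 2) / 4 : ℝ) * u x ^ (((n : ℝ) + 2) / ((n : ℝ) - 2)))
    (hveq : ∀ x ∈ Ω, lapMetric gm v x - ((n : ℝ) - 2) / (4 * ((n : ℝ) - 1)) * Sg x * v x =
      (n * (n - 2) / 4 : ℝ) * v x ^ (((n : ℝ) + 2) / ((n : ℝ) - 2)))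
    (hubdy : ∀ p ∈ frontier Ω, Tendsto u (nhdsWithin p Ω) atTop)
    (hvbdy : ∀ p ∈ frontier Ω, Tendsto v (nhdsWithin p Ω) atTop)
    (hle : ∀ x ∈ Ω, u x ≤ v x)
    (hratio : ∀ p ∈ frontier Ω,
      Tendsto (fun x => v x / u x - 1) (nhdsWithin p Ω) (nhds 0)) :
    ∀ x ∈ Ω, u x = v x := by
  classical
  set f : EuclideanSpace ℝ (Fin n) → ℝ := fun x => if x ∈ Ω then v x / u x - 1 else 0 with hf
  have huCont : ContinuousOn u Ω := huC.continuousOn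
  have hvCont : ContinuousOn v Ω := hvC.continuousOn
  have hratioCont : ContinuousOn (fun x => v x / u x - 1) Ω :=
    (hvCont.div huCont fun x hx => ne_of_gt (hupos x hx)).sub continuousOn_const
  have hfc : Continuous f := by
    rw [continuous_iff_continuousAt]
    intro p
    by_cases hp : p ∈ Ω
    · have hev : (fun x => v x / u x - 1) =ᶠ[nhds p] f := by
        filter_upwards [hΩopen.eventually_mem hp] with y hy
        simp [hf, hy]
      exact (hratioCont.continuousAt (hΩopen.mem_nhds hp)).congr hev
    · by_cases hcl : p ∈ closure Ω
      · have hfr : p ∈ frontier Ω := by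
          rw [hΩopen.frontier_eq]; exact ⟨hcl, hp⟩
        have hf0 : f p = 0 := by simp [hf, hp]
        rw [ContinuousAt, hf0]
        have hnn : nhds p = nhdsWithin p Ω ⊔ nhdsWithin p Ωᶜ := by
          rw [← nhdsWithin_union, Set.union_compl_self, nhdsWithin_univ]
        rw [hnn, tendsto_sup]
        constructor
        · refine (hratio p hfr).congr' ?_
          filter_upwards [self_mem_nhdsWithin] with y hy
          simp [hf, hy]
        · refine (tendsto_const_nhds :
              Tendsto (fun _ => (0:ℝ)) (nhdsWithin p Ωᶜ) (nhds 0)).congr' ?_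
          filter_upwards [self_mem_nhdsWithin] with y hy
          simp [hf, if_neg (hy : y ∉ Ω)]
      · have hev : (fun _ => (0:ℝ)) =ᶠ[nhds p] f := by
          filter_upwards [(isClosed_closure (s := Ω)).isOpen_compl.eventually_mem hcl] with y hy
          have hyΩ : y ∉ Ω := fun h => hy (subset_closure h)
          simp [hf, hyΩ]
        exact continuousAt_const.congr hev
  have hKc : IsCompact (closure Ω) := hΩbdd.isCompact_closure
  obtain ⟨z, hzK, hzmax⟩ := hKc.exists_isMaxOn hΩne.closure hfc.continuousOn
  have hfz : f z ≤ 0 := by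
    by_contra hM
    push_neg at hM
    have hzΩ : z ∈ Ω := by
      by_contra hz
      simp [hf, hz] at hM
    set T : ℝ := f z + 1 with hT
    have hT1 : 1 < T := by simp only [hT]; linarith
    have hT0 : 0 < T := lt_trans one_pos hT1
    have huz : 0 < u z := hupos z hzΩ
    have hTfz : T = v z / u z := by
      simp only [hT, hf, if_pos hzΩ]; ring
    have hvz : v z = T * u z := by
      rw [hTfz, div_mul_cancel₀ _ (ne_of_gt huz)]
    have hloc : IsLocalMax (fun y => v y - T * u y) z := by
      filter_upwards [hΩopen.eventually_mem hzΩ] with y hy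
      have h1 : f y ≤ f z := hzmax (subset_closure hy)
      have h2 : v y / u y - 1 ≤ f z := by simpa [hf, if_pos hy] using h1
      have h3 : v y / u y ≤ T := by rw [hT]; linarith
      have h4 : v y ≤ T * u y := by
        rw [div_le_iff₀ (hupos y hy)] at h3; linarith [h3]
      show v y - T * u y ≤ v z - T * u z
      rw [hvz]; linarith [h4]
    have hhC : ContDiffOn ℝ (⊤ : ℕ∞) (fun y => v y - T * u y) Ω :=
      hvC.sub (contDiffOn_const.mul huC)
    have hlap : lapMetric gm (fun y => v y - T * u y) z ≤ 0 :=
      lapMetric_localMax_nonpos gm hgmsmooth hgmsymm hgmpos hΩopen hhC hzΩ hloc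
    rw [lapMetric_sub_const_mul gm hgmsmooth hgmsymm hgmpos hΩopen huC hvC T hzΩ] at hlap
    set p : ℝ := ((n : ℝ) + 2) / ((n : ℝ) - 2) with hpdef
    have hn3 : (3:ℝ) ≤ (n:ℝ) := by exact_mod_cast hn
    have hn2 : (0:ℝ) < (n:ℝ) - 2 := by linarith
    have hp1 : 1 < p := by
      rw [hpdef, lt_div_iff₀ hn2]; linarith
    have hK : (0:ℝ) < (n : ℝ) * ((n:ℝ) - 2) / 4 := by positivity
    have hTp : T < T ^ p := by
      calc T = T ^ (1:ℝ) := (Real.rpow_one T).symm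
        _ < T ^ p := Real.rpow_lt_rpow_of_exponent_lt hT1 hp1
    have hvp : v z ^ p = T ^ p * u z ^ p := by
      rw [hvz, Real.mul_rpow hT0.le huz.le]
    have ev' : lapMetric gm v z = ((n : ℝ) - 2) / (4 * ((n : ℝ) - 1)) * Sg z * v z
        + (n * (n - 2) / 4 : ℝ) * v z ^ p := by
      have := hveq z hzΩ; linarith
    have eu' : lapMetric gm u z = ((n : ℝ) - 2) / (4 * ((n : ℝ) - 1)) * Sg z * u z
        + (n * (n - 2) / 4 : ℝ) * u z ^ p := by
      have := hueq z hzΩ; linarith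
    have hcomp : lapMetric gm v z - T * lapMetric gm u z
        = (n * (n - 2) / 4 : ℝ) * u z ^ p * (T ^ p - T) := by
      rw [ev', eu', hvp, hvz]; ring
    rw [hcomp] at hlap
    have hpos : 0 < (n * (n - 2) / 4 : ℝ) * u z ^ p * (T ^ p - T) :=
      mul_pos (mul_pos hK (Real.rpow_pos_of_pos huz p)) (sub_pos.mpr hTp)
    linarith
  intro x hx
  have h1 : f x ≤ f z := hzmax (subset_closure hx)
  have h2 : v x / u x - 1 ≤ 0 := by
    have := h1.trans hfz
    simpa [hf, if_pos hx] using this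
  have h3 : v x ≤ u x := by
    rw [← div_le_one (hupos x hx)]; linarith
  exact le_antisymm (hle x hx) h3
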